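/- (Log-convexity of the OU semigroup) Let γ be the standard Gaussian measure on ℝ^d and g ≥ 0 a Borel function in L¹(γ). For t > 0 define T_t g by Mehler's formula. Then for all x₀, x₁ ∈ ℝ^d and s ∈ [0,1], T_t g((1−s)x₀ + s x₁) ≤ exp( s(1−s)|x₁−x₀|²/(2t) ) · (T_t g(x₀))^{1−s} (T_t g(x₁))^{s}. -/

import Mathlib

open MeasureTheory Real ProbabilityTheory ENNReal

noncomputable def stdGaussian (d : ℕ) : Measure (EuclideanSpace ℝ (Fin d)) :=
  (Measure.pi fun _ : Fin d => gaussianReal 0 1).map (MeasurableEquiv.toLp 2 (Fin d → ℝ))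

noncomputable def OUl (d : ℕ) (t : ℝ) (g : EuclideanSpace ℝ (Fin d) → ℝ)
    (x : EuclideanSpace ℝ (Fin d)) : ℝ≥0∞ :=
  ∫⁻ y, ENNReal.ofReal (g (Real.exp (-t) • x + Real.sqrt (1 - Real.exp (-2 * t)) • y))
    ∂(stdGaussian d)

/-!
Mehler's formula writes `T_t g (x) = ∫ H (y + κ x) dγ(y)` with `H z = g (σ z)`,
`σ = √(1 - e^{-2t})`, `κ = e^{-t} / σ`, so it suffices to show that
`u ↦ ∫ H (y + u) dγ(y)` is log-convex up to the factor `exp (s (1 - s) |u₁ - u₀|² / 2)`.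
By the Cameron–Martin formula the translate by `s v` has density
`exp (⟪s v, y⟫ - s² |v|² / 2) = exp (s (1 - s) |v|² / 2) · (exp (⟪v, y⟫ - |v|² / 2))^s`
with respect to `γ`, and Hölder's inequality with exponents `1 / (1 - s)`, `1 / s` finishes.
The constant is controlled by `κ² = 1 / (e^{2t} - 1) ≤ 1 / (2t)`.
-/

namespace MeasureTheory

variable {ι : Type*} [Fintype ι] {α : ι → Type*} [∀ i, MeasurableSpace (α i)]
  {μ : ∀ i, Measure (α i)} [∀ i, IsProbabilityMeasure (μ i)] {f : ∀ i, α i → ℝ≥0∞}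

theorem lintegral_pi_prod_eq_prod (hf : ∀ i, Measurable (f i)) :
    ∫⁻ x, ∏ i, f i (x i) ∂Measure.pi μ = ∏ i, ∫⁻ x, f i x ∂μ i := by
  rw [lintegral_prod_eq_prod_lintegral_of_indepFun _ _
    (iIndepFun_pi fun i => (hf i).aemeasurable) fun i => (hf i).comp (measurable_pi_apply i)]
  exact Finset.prod_congr rfl fun i _ => (measurePreserving_eval μ i).lintegral_comp (hf i)

theorem Measure.pi_withDensity (hf : ∀ i, Measurable (f i))
    [∀ i, SigmaFinite ((μ i).withDensity (f i))] :
    Measure.pi (fun i => (μ i).withDensity (f i))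
      = (Measure.pi μ).withDensity fun x => ∏ i, f i (x i) := by
  refine Measure.pi_eq fun s hs => ?_
  have hbox : (Set.univ.pi s).indicator (fun x => ∏ i, f i (x i))
      = fun x => ∏ i, (s i).indicator (f i) (x i) := by
    ext x
    by_cases hx : x ∈ Set.univ.pi s
    · simp_all [Set.indicator_of_mem]
    · obtain ⟨i, -, hi⟩ := not_forall₂.mp hx
      rw [Set.indicator_of_notMem hx, Finset.prod_eq_zero (Finset.mem_univ i)
        (Set.indicator_of_notMem hi _)]
  rw [withDensity_apply _ (.univ_pi hs), ← lintegral_indicator (.univ_pi hs), hbox,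
    lintegral_pi_prod_eq_prod fun i => (hf i).indicator (hs i)]
  exact Finset.prod_congr rfl fun i _ => by
    rw [lintegral_indicator (hs i), withDensity_apply _ (hs i)]

end MeasureTheory

theorem gaussianReal_eq_withDensity_exp (v : ℝ) :
    gaussianReal v 1 = (gaussianReal 0 1).withDensity
      fun y => ENNReal.ofReal (exp (v * y - v ^ 2 / 2)) := by
  rw [gaussianReal_of_var_ne_zero _ one_ne_zero, gaussianReal_of_var_ne_zero _ one_ne_zero,
    ← withDensity_mul _ (measurable_gaussianPDF _ _) (by fun_prop)]
  congr 1
  ext y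
  rw [Pi.mul_apply, gaussianPDF_def, gaussianPDF_def, ← ENNReal.ofReal_mul
    (gaussianPDFReal_nonneg _ _ _)]
  simp only [gaussianPDFReal_def, mul_assoc, ← Real.exp_add]
  congr 3
  push_cast
  ring

variable {d : ℕ}

theorem map_add_pi_gaussianReal (v : Fin d → ℝ) :
    (Measure.pi fun _ : Fin d => gaussianReal 0 1).map (· + v)
      = (Measure.pi fun _ : Fin d => gaussianReal 0 1).withDensity
          fun y => ∏ i, ENNReal.ofReal (exp (v i * y i - v i ^ 2 / 2)) := by
  rw [← Measure.pi_withDensity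
    (f := fun i y => ENNReal.ofReal (exp (v i * y - v i ^ 2 / 2))) (by fun_prop)]
  simp_rw [← gaussianReal_eq_withDensity_exp]
  have hmap := Measure.pi_map_pi (μ := fun _ => gaussianReal 0 1) (f := fun i y => y + v i)
    fun i => by fun_prop
  simp only [gaussianReal_map_add_const, zero_add] at hmap
  exact hmap

theorem lintegral_stdGaussian_add (v : EuclideanSpace ℝ (Fin d))
    {f : EuclideanSpace ℝ (Fin d) → ℝ≥0∞} (hf : Measurable f) :
    ∫⁻ y, f (y + v) ∂stdGaussian d
      = ∫⁻ y, ENNReal.ofReal (exp (inner ℝ v y - ‖v‖ ^ 2 / 2)) * f y ∂stdGaussian d := by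
  have hf' : Measurable (f ∘ WithLp.toLp 2) := hf.comp (WithLp.measurable_toLp 2 _)
  rw [_root_.stdGaussian, lintegral_map_equiv, lintegral_map_equiv]
  change ∫⁻ y, (f ∘ WithLp.toLp 2) (y + v.ofLp) ∂_ = _
  rw [← lintegral_map hf' (measurable_add_const _), map_add_pi_gaussianReal,
    lintegral_withDensity_eq_lintegral_mul _ (by fun_prop) hf']
  congr 1
  ext y
  simp [Pi.mul_apply, ← ENNReal.ofReal_prod_of_nonneg fun i _ => (exp_pos _).le, ← exp_sum,
    EuclideanSpace.norm_sq_eq, Finset.sum_sub_distrib, Finset.sum_div, PiLp.inner_apply,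
    mul_comm]

theorem lintegral_stdGaussian_add_smul_le {H : EuclideanSpace ℝ (Fin d) → ℝ≥0∞}
    (hH : Measurable H) (v : EuclideanSpace ℝ (Fin d)) {s : ℝ} (hs0 : 0 ≤ s) (hs1 : s ≤ 1) :
    ∫⁻ y, H (y + s • v) ∂stdGaussian d
      ≤ ENNReal.ofReal (exp (s * (1 - s) * ‖v‖ ^ 2 / 2))
        * (∫⁻ y, H y ∂stdGaussian d) ^ (1 - s) * (∫⁻ y, H (y + v) ∂stdGaussian d) ^ s := by
  set c := ENNReal.ofReal (exp (s * (1 - s) * ‖v‖ ^ 2 / 2))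
  set ρ : EuclideanSpace ℝ (Fin d) → ℝ≥0∞ :=
    fun y => ENNReal.ofReal (exp (inner ℝ v y - ‖v‖ ^ 2 / 2))
  have hρ : Measurable ρ := by fun_prop
  have hdensity : ∀ y, ENNReal.ofReal (exp (inner ℝ (s • v) y - ‖s • v‖ ^ 2 / 2)) * H y
      = c * (H y ^ (1 - s) * (ρ y * H y) ^ s) := by
    intro y
    have hexponent : inner ℝ (s • v) y - ‖s • v‖ ^ 2 / 2
        = s * (1 - s) * ‖v‖ ^ 2 / 2 + (inner ℝ v y - ‖v‖ ^ 2 / 2) * s := by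
      rw [real_inner_smul_left, norm_smul, Real.norm_eq_abs, mul_pow, sq_abs]
      ring
    rw [hexponent, exp_add, exp_mul, ENNReal.ofReal_mul (exp_pos _).le,
      ← ENNReal.ofReal_rpow_of_pos (exp_pos _), ENNReal.mul_rpow_of_nonneg _ _ hs0, mul_assoc,
      mul_left_comm (H y ^ (1 - s)), ← ENNReal.rpow_add_of_nonneg _ _ (sub_nonneg.2 hs1) hs0,
      sub_add_cancel, ENNReal.rpow_one]
  calc ∫⁻ y, H (y + s • v) ∂stdGaussian d
      = c * ∫⁻ y, H y ^ (1 - s) * (ρ y * H y) ^ s ∂stdGaussian d := by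
        rw [lintegral_stdGaussian_add _ hH, ← lintegral_const_mul' _ _ ENNReal.ofReal_ne_top]
        exact lintegral_congr hdensity
    _ ≤ c * ((∫⁻ y, H y ∂stdGaussian d) ^ (1 - s) * (∫⁻ y, ρ y * H y ∂stdGaussian d) ^ s) := by
        gcongr
        exact ENNReal.lintegral_mul_norm_pow_le hH.aemeasurable (hρ.mul hH).aemeasurable
          (sub_nonneg.2 hs1) hs0 (sub_add_cancel 1 s)
    _ = _ := by rw [lintegral_stdGaussian_add _ hH, mul_assoc]

theorem lintegral_stdGaussian_add_convexComb_le {H : EuclideanSpace ℝ (Fin d) → ℝ≥0∞}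
    (hH : Measurable H) (u₀ u₁ : EuclideanSpace ℝ (Fin d)) {s : ℝ} (hs0 : 0 ≤ s) (hs1 : s ≤ 1) :
    ∫⁻ y, H (y + ((1 - s) • u₀ + s • u₁)) ∂stdGaussian d
      ≤ ENNReal.ofReal (exp (s * (1 - s) * ‖u₁ - u₀‖ ^ 2 / 2))
        * (∫⁻ y, H (y + u₀) ∂stdGaussian d) ^ (1 - s)
        * (∫⁻ y, H (y + u₁) ∂stdGaussian d) ^ s := by
  have hcomb : ∀ y : EuclideanSpace ℝ (Fin d),
      y + ((1 - s) • u₀ + s • u₁) = y + s • (u₁ - u₀) + u₀ := fun y => by module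
  have hend : ∀ y : EuclideanSpace ℝ (Fin d), y + u₁ = y + (u₁ - u₀) + u₀ := fun y => by abel
  simp only [hcomb, hend]
  exact lintegral_stdGaussian_add_smul_le (hH.comp (measurable_add_const u₀)) _ hs0 hs1

theorem sq_exp_neg_div_sqrt_one_sub_exp_le {t : ℝ} (ht : 0 < t) :
    (exp (-t) / √(1 - exp (-2 * t))) ^ 2 ≤ 1 / (2 * t) := by
  have hpos : 0 < 1 - exp (-2 * t) := sub_pos.2 (exp_lt_one_iff.2 (by linarith))
  have hsq : exp (-t) ^ 2 = exp (-2 * t) := by rw [sq, ← exp_add]; ring_nf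
  have hkey : (2 * t + 1) * exp (-2 * t) ≤ 1 :=
    calc (2 * t + 1) * exp (-2 * t) ≤ exp (2 * t) * exp (-2 * t) := by
          gcongr; exact add_one_le_exp _
      _ = 1 := by rw [← exp_add]; simp
  rw [div_pow, sq_sqrt hpos.le, hsq, div_le_div_iff₀ hpos (by positivity)]
  linarith

theorem OUl_eq_lintegral_add (g : EuclideanSpace ℝ (Fin d) → ℝ) {t : ℝ} (ht : 0 < t)
    (x : EuclideanSpace ℝ (Fin d)) :
    OUl d t g x = ∫⁻ y, ENNReal.ofReal
      (g (√(1 - exp (-2 * t)) • (y + (exp (-t) / √(1 - exp (-2 * t))) • x))) ∂stdGaussian d := by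
  have hσ : √(1 - exp (-2 * t)) ≠ 0 :=
    (sqrt_pos.2 (sub_pos.2 (exp_lt_one_iff.2 (by linarith)))).ne'
  simp only [OUl, smul_add, smul_smul, mul_div_cancel₀ _ hσ, add_comm]

theorem OU_log_convexity_general (d : ℕ) (g : EuclideanSpace ℝ (Fin d) → ℝ)
    (hg : Measurable g)
    (t : ℝ) (ht : 0 < t) (x₀ x₁ : EuclideanSpace ℝ (Fin d)) (s : ℝ) (hs : s ∈ Set.Icc (0:ℝ) 1) :
    OUl d t g ((1 - s) • x₀ + s • x₁)
      ≤ ENNReal.ofReal (Real.exp (s * (1 - s) * ‖x₁ - x₀‖ ^ 2 / (2 * t)))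
        * (OUl d t g x₀) ^ (1 - s) * (OUl d t g x₁) ^ s := by
  obtain ⟨hs0, hs1⟩ := hs
  rw [OUl_eq_lintegral_add g ht, OUl_eq_lintegral_add g ht, OUl_eq_lintegral_add g ht,
    smul_add, smul_comm _ (1 - s), smul_comm _ s]
  have hH : Measurable fun z => ENNReal.ofReal (g (√(1 - exp (-2 * t)) • z)) := by fun_prop
  refine (lintegral_stdGaussian_add_convexComb_le hH _ _ hs0 hs1).trans ?_
  gcongr ENNReal.ofReal (exp ?_) * _ * _
  have hκ := sq_exp_neg_div_sqrt_one_sub_exp_le ht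
  have hweight : 0 ≤ s * (1 - s) * ‖x₁ - x₀‖ ^ 2 :=
    mul_nonneg (mul_nonneg hs0 (sub_nonneg.2 hs1)) (sq_nonneg _)
  rw [← smul_sub, norm_smul, mul_pow, Real.norm_eq_abs, sq_abs]
  calc s * (1 - s) * ((exp (-t) / √(1 - exp (-2 * t))) ^ 2 * ‖x₁ - x₀‖ ^ 2) / 2
      ≤ s * (1 - s) * (1 / (2 * t) * ‖x₁ - x₀‖ ^ 2) / 2 := by gcongr
    _ = s * (1 - s) * ‖x₁ - x₀‖ ^ 2 / (2 * t) / 2 := by ring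
    _ ≤ s * (1 - s) * ‖x₁ - x₀‖ ^ 2 / (2 * t) :=
        half_le_self (div_nonneg hweight (by positivity))

theorem OU_log_convexity (d : ℕ) (g : EuclideanSpace ℝ (Fin d) → ℝ)
    (hg : Measurable g) (hg0 : ∀ x, 0 ≤ g x) (hgint : Integrable g (stdGaussian d))
    (t : ℝ) (ht : 0 < t) (x₀ x₁ : EuclideanSpace ℝ (Fin d)) (s : ℝ) (hs : s ∈ Set.Icc (0:ℝ) 1) :
    OUl d t g ((1 - s) • x₀ + s • x₁)
      ≤ ENNReal.ofReal (Real.exp (s * (1 - s) * ‖x₁ - x₀‖ ^ 2 / (2 * t)))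
        * (OUl d t g x₀) ^ (1 - s) * (OUl d t g x₁) ^ s :=
  OU_log_convexity_general d g hg t ht x₀ x₁ s hs
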